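/- Let E be a vector lattice with the principal projection property, F a Dedekind complete vector lattice, Φ : 𝔅(E) → 𝔅(F) a Boolean homomorphism, and let T, S : E → F both be atomic subordinate to Φ. Then for every x ∈ E: (i) the set {T y + S z : y, z ∈ E, y ⊥ z, y + z = x} has supremum T x ⊔ S x and infimum T x ⊓ S x in F; (ii) the set {T y : y ⊑ x} has supremum (T x)⁺ = T x ⊔ 0 and infimum −(T x)⁻ = T x ⊓ 0. (Consequently, in the vector lattice of regular orthogonally additive operators, (T ∨ S)x = Tx ⊔ Sx, (T ∧ S)x = Tx ⊓ Sx, T⁺x = (Tx)⁺, T⁻x = (Tx)⁻ and |T|x = |Tx|.) -/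

import Mathlib

/-!
Split `x = y + z` with `y ⊥ z` and let `π` be the band projection onto `y`, so `π x = y` and
`(Id - π) x = z`. Atomicity turns `T y + S z` into `Φ(π) (T x - S x) + S x`, and an order
projection `p` satisfies `-a⁻ ≤ p a ≤ a⁺`, which gives `T x ⊓ S x ≤ T y + S z ≤ T x ⊔ S x`.
Both bounds are attained, at the splittings `x + 0` and `0 + x`. The fragments of `x` are the
`y` in the splittings `x = y + (x - y)`, so (ii) is (i) for `S = 0`.
-/

namespace VL

/-- Two elements of a vector lattice are disjoint if `|x| ⊓ |y| = 0`. -/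
def VDisjoint {G : Type*} [Lattice G] [AddCommGroup G] (x y : G) : Prop :=
  |x| ⊓ |y| = 0

/-- `y` is a fragment of `x` if `y ⊥ (x - y)`. -/
def Fragment {G : Type*} [Lattice G] [AddCommGroup G] (y x : G) : Prop :=
  VDisjoint y (x - y)

/-- An order projection: a linear idempotent `π` with `0 ≤ π x ≤ x` for all `x ≥ 0`. -/
def IsOrderProjection {G : Type*} [Lattice G] [AddCommGroup G] [Module ℝ G]
    (π : G →ₗ[ℝ] G) : Prop :=
  (∀ x, π (π x) = π x) ∧ ∀ x : G, 0 ≤ x → 0 ≤ π x ∧ π x ≤ x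

/-- A map between the order projections of `E` and of `F` is a Boolean homomorphism if it
maps order projections to order projections and preserves the Boolean operations
`π ∧ ρ = π ∘ ρ`, `π ∨ ρ = π + ρ - π ∘ ρ` and `compl π = Id - π`. -/
def IsBooleanHom {E F : Type*} [Lattice E] [AddCommGroup E] [Module ℝ E]
    [Lattice F] [AddCommGroup F] [Module ℝ F]
    (Φ : (E →ₗ[ℝ] E) → (F →ₗ[ℝ] F)) : Prop :=
  (∀ π, IsOrderProjection π → IsOrderProjection (Φ π)) ∧
  (∀ π ρ, IsOrderProjection π → IsOrderProjection ρ →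
    Φ (π ∘ₗ ρ) = Φ π ∘ₗ Φ ρ) ∧
  (∀ π ρ, IsOrderProjection π → IsOrderProjection ρ →
    Φ (π + ρ - π ∘ₗ ρ) = Φ π + Φ ρ - Φ π ∘ₗ Φ ρ) ∧
  (∀ π, IsOrderProjection π → Φ (LinearMap.id - π) = LinearMap.id - Φ π)

/-- `T` is atomic subordinate to `Φ` if `T (π x) = Φ(π) (T x)` for every order projection. -/
def IsAtomic {E F : Type*} [Lattice E] [AddCommGroup E] [Module ℝ E]
    [Lattice F] [AddCommGroup F] [Module ℝ F]
    (Φ : (E →ₗ[ℝ] E) → (F →ₗ[ℝ] F)) (T : E → F) : Prop :=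
  ∀ π : E →ₗ[ℝ] E, IsOrderProjection π → ∀ x : E, T (π x) = Φ π (T x)

/-- The principal projection property: for every `x` there is an order projection `π_x`
(the projection onto the band generated by `x`) such that `z - π_x z ⊥ x` for all `z`,
and `π_x z ⊥ w` whenever `w ⊥ x`. -/
def HasPPP (E : Type*) [Lattice E] [AddCommGroup E] [Module ℝ E] : Prop :=
  ∀ x : E, ∃ π : E →ₗ[ℝ] E, IsOrderProjection π ∧
    (∀ z : E, VDisjoint (z - π z) x) ∧
    (∀ z w : E, VDisjoint w x → VDisjoint (π z) w)

/-- Dedekind completeness: every nonempty set bounded above has a supremum. -/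
def DedekindComplete (F : Type*) [Lattice F] : Prop :=
  ∀ S : Set F, S.Nonempty → BddAbove S → ∃ b, IsLUB S b

section LatticeOrderedGroup

variable {G : Type*} [Lattice G] [AddCommGroup G]

lemma VDisjoint.symm {x y : G} (h : VDisjoint x y) : VDisjoint y x := by
  rwa [VDisjoint, inf_comm]

variable [AddLeftMono G]

lemma eq_zero_of_abs_eq_zero {a : G} (h : |a| = 0) : a = 0 :=
  le_antisymm (h ▸ le_abs_self a) (neg_nonpos.mp (h ▸ neg_le_abs a))

lemma vdisjoint_zero_right (x : G) : VDisjoint x 0 := by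
  simp [VDisjoint]

lemma VDisjoint.eq_zero_of_abs_le {a b : G} (h : VDisjoint a b) (hab : |a| ≤ |b|) : a = 0 :=
  eq_zero_of_abs_eq_zero (by rwa [VDisjoint, inf_eq_left.mpr hab] at h)

end LatticeOrderedGroup

section OrderProjection

variable {G : Type*} [Lattice G] [AddCommGroup G] [Module ℝ G] [AddLeftMono G]
  {π : G →ₗ[ℝ] G}

lemma IsOrderProjection.compl (hπ : IsOrderProjection π) :
    IsOrderProjection (LinearMap.id - π) := by
  refine ⟨fun x => ?_, fun x hx => ⟨?_, ?_⟩⟩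
  · simp only [LinearMap.sub_apply, LinearMap.id_apply, map_sub, hπ.1, sub_self, sub_zero]
  · simpa using (hπ.2 x hx).2
  · simpa using (hπ.2 x hx).1

lemma IsOrderProjection.apply_le_posPart (hπ : IsOrderProjection π) (z : G) : π z ≤ z⁺ :=
  calc π z = π z⁺ - π z⁻ := by rw [← map_sub, posPart_sub_negPart]
    _ ≤ z⁺ - 0 := sub_le_sub (hπ.2 _ (posPart_nonneg z)).2 (hπ.2 _ (negPart_nonneg z)).1
    _ = z⁺ := sub_zero _

lemma IsOrderProjection.abs_apply_le (hπ : IsOrderProjection π) (z : G) : |π z| ≤ |z| :=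
  calc |π z| = π z ⊔ π (-z) := by rw [map_neg]; rfl
    _ ≤ z⁺ ⊔ z⁻ := by
      rw [← posPart_neg]; exact sup_le_sup (hπ.apply_le_posPart z) (hπ.apply_le_posPart (-z))
    _ ≤ z⁺ + z⁻ := sup_le (le_add_of_nonneg_right (negPart_nonneg z))
        (le_add_of_nonneg_left (posPart_nonneg z))
    _ = |z| := posPart_add_negPart z

lemma IsOrderProjection.inf_le_apply_sub_add (hπ : IsOrderProjection π) (a b : G) :
    a ⊓ b ≤ π (a - b) + b :=
  calc a ⊓ b = b - (b - a)⁺ := by rw [inf_comm, inf_eq_sub_posPart_sub]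
    _ ≤ b - π (b - a) := sub_le_sub_left (hπ.apply_le_posPart _) b
    _ = π (a - b) + b := by rw [← neg_sub a b, map_neg]; abel

lemma IsOrderProjection.apply_sub_add_le_sup (hπ : IsOrderProjection π) (a b : G) :
    π (a - b) + b ≤ a ⊔ b :=
  calc π (a - b) + b ≤ (a - b)⁺ + b := add_le_add_left (hπ.apply_le_posPart _) b
    _ = a ⊔ b := by rw [sup_eq_add_posPart_sub, add_comm]

end OrderProjection

lemma exists_isOrderProjection_apply_add_eq_left {E : Type*} [Lattice E] [AddCommGroup E]
    [Module ℝ E] [AddLeftMono E] (hE : HasPPP E) {y z : E} (hyz : VDisjoint y z) :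
    ∃ π : E →ₗ[ℝ] E, IsOrderProjection π ∧ π (y + z) = y := by
  obtain ⟨π, hπ, hcompl, hband⟩ := hE y
  have hπy : π y = y := by
    have := (hcompl y).eq_zero_of_abs_le (by simpa using hπ.compl.abs_apply_le y)
    exact (sub_eq_zero.mp this).symm
  have hπz : π z = 0 := (hband z z hyz.symm).eq_zero_of_abs_le (hπ.abs_apply_le z)
  exact ⟨π, hπ, by rw [map_add, hπy, hπz, add_zero]⟩

section Atomic

variable {E F : Type*} [Lattice E] [AddCommGroup E] [AddCommGroup F] {T S : E → F}

def disjointSums (T S : E → F) (x : E) : Set F :=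
  {w | ∃ y z : E, VDisjoint y z ∧ y + z = x ∧ w = T y + S z}

lemma setOf_fragment_eq_disjointSums_zero (x : E) :
    {w : F | ∃ y : E, Fragment y x ∧ w = T y} = disjointSums T (fun _ => 0) x := by
  ext w
  constructor
  · rintro ⟨y, hy, rfl⟩
    exact ⟨y, x - y, hy, add_sub_cancel y x, (add_zero _).symm⟩
  · rintro ⟨y, z, hyz, rfl, rfl⟩
    exact ⟨y, by rwa [Fragment, add_sub_cancel_left], add_zero _⟩

variable [Module ℝ E] [Lattice F] [Module ℝ F] {Φ : (E →ₗ[ℝ] E) → (F →ₗ[ℝ] F)}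

lemma isAtomic_zero : IsAtomic Φ (fun _ : E => (0 : F)) :=
  fun π _ _ => (map_zero (Φ π)).symm

variable [AddLeftMono E]

/-- Applied to `0 = π 0` with `π = 0` and `π = Id - 0`, atomicity gives both `T 0 = Φ 0 (T 0)`
and `T 0 = T 0 - Φ 0 (T 0)`. -/
lemma IsAtomic.map_zero (hΦ : IsBooleanHom Φ) (hT : IsAtomic Φ T) : T 0 = 0 := by
  have hzero : IsOrderProjection (0 : E →ₗ[ℝ] E) := ⟨fun _ => rfl, fun _ hx => ⟨le_rfl, hx⟩⟩
  have h0 : T 0 = Φ 0 (T 0) := by simpa using hT 0 hzero 0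
  have hid : T 0 = T 0 - Φ 0 (T 0) := by
    have := hT (LinearMap.id - 0) hzero.compl 0
    rw [hΦ.2.2.2 0 hzero] at this
    simpa using this
  rwa [← h0, sub_self] at hid

lemma left_apply_mem_disjointSums (hΦ : IsBooleanHom Φ) (hS : IsAtomic Φ S) (x : E) :
    T x ∈ disjointSums T S x :=
  ⟨x, 0, vdisjoint_zero_right x, add_zero x, by rw [hS.map_zero hΦ, add_zero]⟩

lemma right_apply_mem_disjointSums (hΦ : IsBooleanHom Φ) (hT : IsAtomic Φ T) (x : E) :
    S x ∈ disjointSums T S x :=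
  ⟨0, x, (vdisjoint_zero_right x).symm, zero_add x, by rw [hT.map_zero hΦ, zero_add]⟩

lemma exists_isOrderProjection_of_mem_disjointSums (hE : HasPPP E) (hΦ : IsBooleanHom Φ)
    (hT : IsAtomic Φ T) (hS : IsAtomic Φ S) {x : E} {w : F} (hw : w ∈ disjointSums T S x) :
    ∃ p : F →ₗ[ℝ] F, IsOrderProjection p ∧ w = p (T x - S x) + S x := by
  obtain ⟨y, z, hyz, rfl, rfl⟩ := hw
  obtain ⟨π, hπ, hπx⟩ := exists_isOrderProjection_apply_add_eq_left hE hyz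
  have hTy : T y = Φ π (T (y + z)) := by rw [← hT π hπ, hπx]
  have hSz : S z = S (y + z) - Φ π (S (y + z)) :=
    calc S z = S ((LinearMap.id - π : E →ₗ[ℝ] E) (y + z)) := by
          rw [LinearMap.sub_apply, LinearMap.id_apply, hπx, add_sub_cancel_left]
      _ = S (y + z) - Φ π (S (y + z)) := by
          rw [hS _ hπ.compl, hΦ.2.2.2 π hπ, LinearMap.sub_apply, LinearMap.id_apply]
  refine ⟨Φ π, hΦ.1 π hπ, ?_⟩
  rw [hTy, hSz, map_sub]
  abel

variable [AddLeftMono F]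

lemma isLUB_disjointSums (hE : HasPPP E) (hΦ : IsBooleanHom Φ) (hT : IsAtomic Φ T)
    (hS : IsAtomic Φ S) (x : E) : IsLUB (disjointSums T S x) (T x ⊔ S x) := by
  refine ⟨fun w hw => ?_, fun b hb => sup_le (hb (left_apply_mem_disjointSums hΦ hS x))
    (hb (right_apply_mem_disjointSums hΦ hT x))⟩
  obtain ⟨p, hp, rfl⟩ := exists_isOrderProjection_of_mem_disjointSums hE hΦ hT hS hw
  exact hp.apply_sub_add_le_sup _ _

lemma isGLB_disjointSums (hE : HasPPP E) (hΦ : IsBooleanHom Φ) (hT : IsAtomic Φ T)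
    (hS : IsAtomic Φ S) (x : E) : IsGLB (disjointSums T S x) (T x ⊓ S x) := by
  refine ⟨fun w hw => ?_, fun b hb => le_inf (hb (left_apply_mem_disjointSums hΦ hS x))
    (hb (right_apply_mem_disjointSums hΦ hT x))⟩
  obtain ⟨p, hp, rfl⟩ := exists_isOrderProjection_of_mem_disjointSums hE hΦ hT hS hw
  exact hp.inf_le_apply_sub_add _ _

end Atomic

variable {E F : Type*}
  [Lattice E] [AddCommGroup E] [Module ℝ E]
  [CovariantClass E E (· + ·) (· ≤ ·)] [PosSMulMono ℝ E]
  [Lattice F] [AddCommGroup F] [Module ℝ F]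
  [CovariantClass F F (· + ·) (· ≤ ·)] [PosSMulMono ℝ F]

theorem atomic_lattice_formulas_general
    (hE : HasPPP E)
    (Φ : (E →ₗ[ℝ] E) → (F →ₗ[ℝ] F)) (hΦ : IsBooleanHom Φ)
    (T S : E → F) (hT : IsAtomic Φ T) (hS : IsAtomic Φ S) :
    ∀ x : E,
      IsLUB {w : F | ∃ y z : E, VDisjoint y z ∧ y + z = x ∧ w = T y + S z} (T x ⊔ S x) ∧
      IsGLB {w : F | ∃ y z : E, VDisjoint y z ∧ y + z = x ∧ w = T y + S z} (T x ⊓ S x) ∧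
      IsLUB {w : F | ∃ y : E, Fragment y x ∧ w = T y} (T x ⊔ 0) ∧
      IsGLB {w : F | ∃ y : E, Fragment y x ∧ w = T y} (T x ⊓ 0) := by
  intro x
  rw [setOf_fragment_eq_disjointSums_zero]
  exact ⟨isLUB_disjointSums hE hΦ hT hS x, isGLB_disjointSums hE hΦ hT hS x,
    isLUB_disjointSums hE hΦ hT isAtomic_zero x, isGLB_disjointSums hE hΦ hT isAtomic_zero x⟩

/-- lattice-operation formulas for atomic operators. -/
theorem atomic_lattice_formulas
    (hE : HasPPP E) (hF : DedekindComplete F)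
    (Φ : (E →ₗ[ℝ] E) → (F →ₗ[ℝ] F)) (hΦ : IsBooleanHom Φ)
    (T S : E → F) (hT : IsAtomic Φ T) (hS : IsAtomic Φ S) :
    ∀ x : E,
      IsLUB {w : F | ∃ y z : E, VDisjoint y z ∧ y + z = x ∧ w = T y + S z} (T x ⊔ S x) ∧
      IsGLB {w : F | ∃ y z : E, VDisjoint y z ∧ y + z = x ∧ w = T y + S z} (T x ⊓ S x) ∧
      IsLUB {w : F | ∃ y : E, Fragment y x ∧ w = T y} (T x ⊔ 0) ∧
      IsGLB {w : F | ∃ y : E, Fragment y x ∧ w = T y} (T x ⊓ 0) :=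
  atomic_lattice_formulas_general hE Φ hΦ T S hT hS

end VL
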